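/- If P ∧ ω = 0 for P ∈ ∧³(ℂ^6)* and ω ∈ ∧²(ℂ^6)*, then the dual three-form P̃ (with components P̃_{abc} = (K_P)^c_i P_{cjk}, antisymmetrized appropriately, i.e. P̃ = (1/3!)(K_P)^c_i P_{cjk} e^i ∧ e^j ∧ e^k) also satisfies P̃ ∧ ω = 0. -/

import Mathlib

set_option maxRecDepth 4000
set_option maxHeartbeats 2000000


/-- The Levi-Civita symbol `ε^{i_1 ... i_6}` on six indices. -/
noncomputable def eps6 (f : Fin 6 → Fin 6) : ℂ :=
  if h : Function.Bijective f then ((Equiv.Perm.sign (Equiv.ofBijective f h) : ℤ) : ℂ) else 0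

/-- Antisymmetry of the components of a three-form. -/
def Antisym3 (P : Fin 6 → Fin 6 → Fin 6 → ℂ) : Prop :=
  (∀ i j k, P i j k = -P j i k) ∧ (∀ i j k, P i j k = -P i k j)

/-- The 6×6 matrix covariant `(K_P)^a_b = (1/12) ε^{a i_1 i_2 i_3 i_4 i_5} P_{b i_1 i_2} P_{i_3 i_4 i_5}`. -/
noncomputable def Kmat (P : Fin 6 → Fin 6 → Fin 6 → ℂ) : Matrix (Fin 6) (Fin 6) ℂ :=
  Matrix.of fun a b =>
    (1/12 : ℂ) * ∑ i1, ∑ i2, ∑ i3, ∑ i4, ∑ i5,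
      eps6 ![a, i1, i2, i3, i4, i5] * P b i1 i2 * P i3 i4 i5

/-- The quartic invariant `𝒟(P) = (1/6) Tr(K_P²)`. -/
noncomputable def Dinv (P : Fin 6 → Fin 6 → Fin 6 → ℂ) : ℂ :=
  (1/6 : ℂ) * Matrix.trace (Kmat P * Kmat P)

/-- Antisymmetry of the components of a two-form. -/
def Antisym2 (ω : Fin 6 → Fin 6 → ℂ) : Prop := ∀ a b, ω a b = -ω b a

/-- The condition `P ∧ ω = 0` (primitivity of the three-form `P` with respect to
the two-form `ω`), expressed as the vanishing of the total antisymmetrization of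
`P_{i_1 i_2 i_3} ω_{i_4 i_5}` in all five indices. -/
def WedgeZero (P : Fin 6 → Fin 6 → Fin 6 → ℂ) (ω : Fin 6 → Fin 6 → ℂ) : Prop :=
  ∀ f : Fin 5 → Fin 6, ∑ σ : Equiv.Perm (Fin 5),
    ((Equiv.Perm.sign σ : ℤ) : ℂ) *
      P (f (σ 0)) (f (σ 1)) (f (σ 2)) * ω (f (σ 3)) (f (σ 4)) = 0

/-- The dual three-form `P̃ = (1/3!) (K_P)^c_i P_{cjk} e^i ∧ e^j ∧ e^k`; its
(not yet antisymmetrized) component array is `(K_P)^c_i P_{cjk}`. -/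
noncomputable def PtildeRaw (P : Fin 6 → Fin 6 → Fin 6 → ℂ) : Fin 6 → Fin 6 → Fin 6 → ℂ :=
  fun i j k => ∑ c, Kmat P c i * P c j k

/-- eps6 as a determinant of the "permutation-like" matrix of `f`. -/
lemma eps6_eq_det (f : Fin 6 → Fin 6) :
    eps6 f = Matrix.det (Matrix.of fun i j => if f i = j then (1:ℂ) else 0) := by
  by_cases h : Function.Bijective f
  · rw [eps6, dif_pos h]
    have : (Matrix.of fun i j => if f i = j then (1:ℂ) else 0)
        = Equiv.Perm.permMatrix ℂ (Equiv.ofBijective f h) := by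
      ext i j
      simp [Matrix.of_apply, Equiv.Perm.permMatrix, PEquiv.toMatrix, Equiv.toPEquiv,
        Equiv.ofBijective_apply, eq_comm]
    rw [this, Matrix.det_permutation]
  · rw [eps6, dif_neg h]
    have hinj : ¬ Function.Injective f := by
      intro hi; exact h ⟨hi, Finite.surjective_of_injective hi⟩
    rw [Function.not_injective_iff] at hinj
    obtain ⟨i, j, hij, hne⟩ := hinj
    refine (Matrix.det_zero_of_row_eq hne ?_).symm
    funext k; simp [Matrix.of_apply, hij]

lemma eps6_comp_equiv (f : Fin 6 → Fin 6) (σ : Equiv.Perm (Fin 6)) :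
    eps6 (f ∘ σ) = ((Equiv.Perm.sign σ : ℤ) : ℂ) * eps6 f := by
  by_cases h : Function.Bijective f
  · have h2 : Function.Bijective (f ∘ σ) := h.comp σ.bijective
    rw [eps6, dif_pos h2, eps6, dif_pos h]
    have : Equiv.ofBijective (f ∘ σ) h2 = σ.trans (Equiv.ofBijective f h) := by
      ext x; rfl
    rw [this]
    have : σ.trans (Equiv.ofBijective f h) = (Equiv.ofBijective f h) * σ := rfl
    rw [this, Equiv.Perm.sign_mul]
    push_cast
    ring
  · have h2 : ¬ Function.Bijective (f ∘ σ) := by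
      intro hc
      have := hc.comp σ.symm.bijective
      have e : (f ∘ σ) ∘ σ.symm = f := by funext x; simp
      rw [e] at this; exact h this
    rw [eps6, dif_neg h2, eps6, dif_neg h, mul_zero]

lemma eps6_comp_swap (f : Fin 6 → Fin 6) (i j : Fin 6) (hij : i ≠ j) :
    eps6 (f ∘ Equiv.swap i j) = - eps6 f := by
  rw [eps6_comp_equiv, Equiv.Perm.sign_swap hij]
  simp

/-- Schouten-type identity: over-antisymmetrization of `eps6` over seven slots vanishes. -/
lemma schouten (g : Fin 7 → Fin 6) (b : Fin 6) :
    ∑ k : Fin 7, (-1 : ℂ) ^ (k : ℕ) * (if g k = b then (1:ℂ) else 0)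
      * eps6 (g ∘ Fin.succAbove k) = 0 := by
  -- the 7×7 matrix whose first six columns record `g` and whose last column duplicates column `b`
  set ψ : Fin 7 → Fin 6 := Fin.snoc (fun j : Fin 6 => j) b with hψ
  set B : Matrix (Fin (Nat.succ 6)) (Fin (Nat.succ 6)) ℂ := Matrix.of (fun k j => if g k = ψ j then 1 else 0) with hB
  have hdet : B.det = 0 := by
    refine Matrix.det_zero_of_column_eq (i := Fin.castSucc b) (j := Fin.last 6) ?_ ?_
    · exact ne_of_lt (Fin.castSucc_lt_last b)
    · intro k
      have h1 : ψ (Fin.castSucc b) = b := by simp [hψ]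
      have h2 : ψ (Fin.last 6) = b := by simp only [hψ, Fin.snoc_last]
      simp only [hB, Matrix.of_apply, h1, h2]
  have hexp := (Matrix.det_succ_column (n := 6) B (Fin.last 6)).symm.trans hdet
  have : ∀ k : Fin 7, (-1 : ℂ) ^ ((k : ℕ) + ((Fin.last 6 : Fin 7) : ℕ)) * B k (Fin.last 6)
      * (B.submatrix k.succAbove (Fin.last 6).succAbove).det
      = (-1 : ℂ) ^ (k : ℕ) * (if g k = b then (1:ℂ) else 0) * eps6 (g ∘ Fin.succAbove k) := by
    intro k
    have hlast : ((Fin.last 6 : Fin 7) : ℕ) = 6 := rfl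
    have hsub : B.submatrix k.succAbove (Fin.last 6).succAbove
        = Matrix.of (fun i j => if (g ∘ k.succAbove) i = j then (1:ℂ) else 0) := by
      ext i j
      have : (Fin.last 6).succAbove j = Fin.castSucc j := by
        rw [Fin.succAbove_last]
      simp only [hB, Matrix.submatrix_apply, Matrix.of_apply, this, hψ, Fin.snoc_castSucc, Function.comp_apply]
    have hBk : B k (Fin.last 6) = (if g k = b then (1:ℂ) else 0) := by
      simp only [hB, hψ, Matrix.of_apply, Fin.snoc_last]
    rw [hsub, ← eps6_eq_det, hBk, hlast, pow_add]
    norm_num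
  rw [← Finset.sum_congr rfl (fun k _ => this k)]
  exact hexp

lemma sum_fun_succ {n : ℕ} (F : (Fin (n+1) → Fin 6) → ℂ) :
    ∑ h : Fin (n+1) → Fin 6, F h = ∑ a : Fin 6, ∑ h : Fin n → Fin 6, F (Fin.cons a h) := by
  rw [← Equiv.sum_comp (Fin.consEquiv (fun _ => Fin 6)) F, Fintype.sum_prod_type]
  rfl

lemma sum_fun5 (F : (Fin 5 → Fin 6) → ℂ) :
    ∑ h : Fin 5 → Fin 6, F h
      = ∑ a, ∑ b, ∑ c, ∑ d, ∑ e, F ![a,b,c,d,e] := by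
  rw [sum_fun_succ]
  refine Finset.sum_congr rfl (fun a _ => ?_)
  rw [sum_fun_succ]
  refine Finset.sum_congr rfl (fun b _ => ?_)
  rw [sum_fun_succ]
  refine Finset.sum_congr rfl (fun c _ => ?_)
  rw [sum_fun_succ]
  refine Finset.sum_congr rfl (fun d _ => ?_)
  rw [sum_fun_succ]
  refine Finset.sum_congr rfl (fun e _ => ?_)
  rw [Fintype.sum_subsingleton _ (finZeroElim : Fin 0 → Fin 6)]
  rfl

/-- The embedding of a 5-tuple into a 6-tuple with `x` inserted in slot 2. -/
def Etup (x : Fin 6) (h : Fin 5 → Fin 6) : Fin 6 → Fin 6 := ![h 0, h 1, x, h 2, h 3, h 4]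

def iota : Fin 5 → Fin 6 := (2 : Fin 6).succAbove

lemma Etup_iota (x : Fin 6) (h : Fin 5 → Fin 6) (j : Fin 5) : Etup x h (iota j) = h j := by
  fin_cases j <;> rfl

lemma iota_ne_two (j : Fin 5) : iota j ≠ 2 := Fin.succAbove_ne 2 j

lemma iota_inj : Function.Injective iota := Fin.succAbove_right_injective

lemma Etup_swap (x : Fin 6) (f : Fin 5 → Fin 6) (a b : Fin 5) :
    Etup x (f ∘ Equiv.swap a b) = Etup x f ∘ Equiv.swap (iota a) (iota b) := by
  funext y
  by_cases hy : y = 2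
  · subst hy
    have : Equiv.swap (iota a) (iota b) 2 = 2 :=
      Equiv.swap_apply_of_ne_of_ne (Ne.symm (iota_ne_two a)) (Ne.symm (iota_ne_two b))
    show Etup x (f ∘ Equiv.swap a b) 2 = Etup x f (Equiv.swap (iota a) (iota b) 2)
    rw [this]; rfl
  · obtain ⟨j, rfl⟩ := Fin.exists_succAbove_eq hy
    show Etup x (f ∘ Equiv.swap a b) (iota j) = Etup x f (Equiv.swap (iota a) (iota b) (iota j))
    rw [Etup_iota, iota_inj.swap_apply, Etup_iota]
    rfl

lemma eps6_Etup_perm (σ : Equiv.Perm (Fin 5)) :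
    ∀ (x : Fin 6) (f : Fin 5 → Fin 6),
      eps6 (Etup x (f ∘ σ)) = ((Equiv.Perm.sign σ : ℤ) : ℂ) * eps6 (Etup x f) := by
  refine Equiv.Perm.swap_induction_on σ ?_ ?_
  · intro x f
    simp
  · intro τ a b hab IH x f
    have h1 : f ∘ ⇑(Equiv.swap a b * τ) = (f ∘ ⇑(Equiv.swap a b)) ∘ ⇑τ := rfl
    rw [h1, IH x (f ∘ ⇑(Equiv.swap a b)), Etup_swap,
      eps6_comp_swap _ _ _ (fun hc => hab (iota_inj hc)),
      Equiv.Perm.sign_mul, Equiv.Perm.sign_swap hab]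
    push_cast
    ring


/-- `hprim` reshuffled: the slots of `P` and `ω` permuted by `ρ = (2,3,4,1,0)`. -/
lemma hprim_rho (P : Fin 6 → Fin 6 → Fin 6 → ℂ) (ω : Fin 6 → Fin 6 → ℂ)
    (hprim : WedgeZero P ω) (h : Fin 5 → Fin 6) :
    ∑ σ : Equiv.Perm (Fin 5), ((Equiv.Perm.sign σ : ℤ) : ℂ) *
      (P (h (σ 2)) (h (σ 3)) (h (σ 4)) * ω (h (σ 1)) (h (σ 0))) = 0 := by
  obtain ⟨ρ, r0, r1, r2, r3, r4⟩ :
      ∃ ρ : Equiv.Perm (Fin 5), ρ 0 = 2 ∧ ρ 1 = 3 ∧ ρ 2 = 4 ∧ ρ 3 = 1 ∧ ρ 4 = 0 :=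
    ⟨Equiv.swap 0 2 * Equiv.swap 2 4 * Equiv.swap 1 3, by decide, by decide, by decide,
      by decide, by decide⟩
  have hsgn : ∀ σ : Equiv.Perm (Fin 5), ((Equiv.Perm.sign σ : ℤ) : ℂ)
      = ((Equiv.Perm.sign ρ : ℤ) : ℂ) * ((Equiv.Perm.sign (σ * ρ) : ℤ) : ℂ) := by
    intro σ
    have : (Equiv.Perm.sign ρ) * (Equiv.Perm.sign (σ * ρ)) = Equiv.Perm.sign σ := by
      rw [Equiv.Perm.sign_mul, mul_comm (Equiv.Perm.sign σ), ← mul_assoc,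
        Int.units_mul_self, one_mul]
    rw [← this]
    push_cast
    ring
  have step1 : ∑ σ : Equiv.Perm (Fin 5), ((Equiv.Perm.sign σ : ℤ) : ℂ) *
      (P (h (σ 2)) (h (σ 3)) (h (σ 4)) * ω (h (σ 1)) (h (σ 0)))
      = ((Equiv.Perm.sign ρ : ℤ) : ℂ) * ∑ σ : Equiv.Perm (Fin 5),
        ((Equiv.Perm.sign (σ * ρ) : ℤ) : ℂ) *
        (P (h ((σ * ρ) 0)) (h ((σ * ρ) 1)) (h ((σ * ρ) 2)) * ω (h ((σ * ρ) 3)) (h ((σ * ρ) 4))) := by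
    rw [Finset.mul_sum]
    refine Finset.sum_congr rfl (fun σ _ => ?_)
    simp only [Equiv.Perm.mul_apply, r0, r1, r2, r3, r4]
    rw [hsgn σ]
    ring
  have hcomp := Equiv.sum_comp (Equiv.mulRight ρ)
    (fun τ => ((Equiv.Perm.sign τ : ℤ) : ℂ) *
      (P (h (τ 0)) (h (τ 1)) (h (τ 2)) * ω (h (τ 3)) (h (τ 4))))
  simp only [Equiv.coe_mulRight] at hcomp
  rw [step1, hcomp]
  have := hprim h
  have e : ∑ τ : Equiv.Perm (Fin 5), ((Equiv.Perm.sign τ : ℤ) : ℂ) *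
      (P (h (τ 0)) (h (τ 1)) (h (τ 2)) * ω (h (τ 3)) (h (τ 4)))
      = ∑ τ : Equiv.Perm (Fin 5), ((Equiv.Perm.sign τ : ℤ) : ℂ) *
      P (h (τ 0)) (h (τ 1)) (h (τ 2)) * ω (h (τ 3)) (h (τ 4)) :=
    Finset.sum_congr rfl (fun τ _ => by ring)
  rw [e, this, mul_zero]

lemma Etup_mk (x a b c d e : Fin 6) : Etup x ![a, b, c, d, e] = ![a, b, x, c, d, e] := by
  funext y; fin_cases y <;> rfl

/-- The fully `ε`-contracted form of the primitivity condition. -/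
lemma Qzero (P : Fin 6 → Fin 6 → Fin 6 → ℂ) (ω : Fin 6 → Fin 6 → ℂ)
    (hprim : WedgeZero P ω) (x : Fin 6) :
    ∑ d, ∑ c, ∑ i3, ∑ i4, ∑ i5,
      P i3 i4 i5 * ω c d * eps6 ![d, c, x, i3, i4, i5] = 0 := by
  set F : (Fin 5 → Fin 6) → ℂ :=
    fun h => P (h 2) (h 3) (h 4) * ω (h 1) (h 0) * eps6 (Etup x h) with hF
  have hfull : ∑ d, ∑ c, ∑ i3, ∑ i4, ∑ i5,
      P i3 i4 i5 * ω c d * eps6 ![d, c, x, i3, i4, i5] = ∑ h : Fin 5 → Fin 6, F h := by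
    rw [sum_fun5 F]
    refine Finset.sum_congr rfl (fun d _ => ?_)
    refine Finset.sum_congr rfl (fun c _ => ?_)
    refine Finset.sum_congr rfl (fun i3 _ => ?_)
    refine Finset.sum_congr rfl (fun i4 _ => ?_)
    refine Finset.sum_congr rfl (fun i5 _ => ?_)
    rw [hF]
    show P i3 i4 i5 * ω c d * eps6 ![d, c, x, i3, i4, i5]
      = P i3 i4 i5 * ω c d * eps6 (Etup x ![d, c, i3, i4, i5])
    rw [Etup_mk]
  have hσ : ∀ σ : Equiv.Perm (Fin 5), ∑ h : Fin 5 → Fin 6, F h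
      = ∑ h : Fin 5 → Fin 6, (((Equiv.Perm.sign σ : ℤ) : ℂ) *
          (P (h (σ 2)) (h (σ 3)) (h (σ 4)) * ω (h (σ 1)) (h (σ 0)))) * eps6 (Etup x h) := by
    intro σ
    have hcomp := Equiv.sum_comp (Equiv.arrowCongr σ.symm (Equiv.refl (Fin 6))) F
    rw [← hcomp]
    refine Finset.sum_congr rfl (fun h _ => ?_)
    show F (h ∘ σ) = _
    rw [hF]
    show P (h (σ 2)) (h (σ 3)) (h (σ 4)) * ω (h (σ 1)) (h (σ 0)) * eps6 (Etup x (h ∘ σ)) = _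
    rw [eps6_Etup_perm σ x h]
    ring
  have hcard : (Finset.univ : Finset (Equiv.Perm (Fin 5))).card = 120 := by
    rw [Finset.card_univ, Fintype.card_perm]
    rfl
  have h120 : (120 : ℂ) * (∑ h : Fin 5 → Fin 6, F h) = 0 := by
    calc (120 : ℂ) * (∑ h : Fin 5 → Fin 6, F h)
        = ∑ _σ : Equiv.Perm (Fin 5), (∑ h : Fin 5 → Fin 6, F h) := by
          rw [Finset.sum_const, hcard, nsmul_eq_mul]
          norm_num
      _ = ∑ σ : Equiv.Perm (Fin 5), ∑ h : Fin 5 → Fin 6,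
            (((Equiv.Perm.sign σ : ℤ) : ℂ) *
              (P (h (σ 2)) (h (σ 3)) (h (σ 4)) * ω (h (σ 1)) (h (σ 0)))) * eps6 (Etup x h) :=
          Finset.sum_congr rfl (fun σ _ => hσ σ)
      _ = ∑ h : Fin 5 → Fin 6, (∑ σ : Equiv.Perm (Fin 5),
            ((Equiv.Perm.sign σ : ℤ) : ℂ) *
              (P (h (σ 2)) (h (σ 3)) (h (σ 4)) * ω (h (σ 1)) (h (σ 0)))) * eps6 (Etup x h) := by
          rw [Finset.sum_comm]
          exact Finset.sum_congr rfl (fun h _ => (Finset.sum_mul _ _ _).symm)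
      _ = 0 := by
          refine Finset.sum_eq_zero (fun h _ => ?_)
          rw [hprim_rho P ω hprim h, zero_mul]
  rw [hfull]
  have := mul_eq_zero.mp h120
  simpa using this

lemma sa0 (a0 a1 a2 a3 a4 a5 a6 : Fin 6) :
    ![a0,a1,a2,a3,a4,a5,a6] ∘ (0 : Fin 7).succAbove = ![a1,a2,a3,a4,a5,a6] := by
  funext x; fin_cases x <;> rfl
lemma sa1 (a0 a1 a2 a3 a4 a5 a6 : Fin 6) :
    ![a0,a1,a2,a3,a4,a5,a6] ∘ (1 : Fin 7).succAbove = ![a0,a2,a3,a4,a5,a6] := by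
  funext x; fin_cases x <;> rfl
lemma sa2 (a0 a1 a2 a3 a4 a5 a6 : Fin 6) :
    ![a0,a1,a2,a3,a4,a5,a6] ∘ (2 : Fin 7).succAbove = ![a0,a1,a3,a4,a5,a6] := by
  funext x; fin_cases x <;> rfl
lemma sa3 (a0 a1 a2 a3 a4 a5 a6 : Fin 6) :
    ![a0,a1,a2,a3,a4,a5,a6] ∘ (3 : Fin 7).succAbove = ![a0,a1,a2,a4,a5,a6] := by
  funext x; fin_cases x <;> rfl
lemma sa4 (a0 a1 a2 a3 a4 a5 a6 : Fin 6) :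
    ![a0,a1,a2,a3,a4,a5,a6] ∘ (4 : Fin 7).succAbove = ![a0,a1,a2,a3,a5,a6] := by
  funext x; fin_cases x <;> rfl
lemma sa5 (a0 a1 a2 a3 a4 a5 a6 : Fin 6) :
    ![a0,a1,a2,a3,a4,a5,a6] ∘ (5 : Fin 7).succAbove = ![a0,a1,a2,a3,a4,a6] := by
  funext x; fin_cases x <;> rfl
lemma sa6 (a0 a1 a2 a3 a4 a5 a6 : Fin 6) :
    ![a0,a1,a2,a3,a4,a5,a6] ∘ (6 : Fin 7).succAbove = ![a0,a1,a2,a3,a4,a5] := by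
  funext x; fin_cases x <;> rfl
lemma ve0 (a0 a1 a2 a3 a4 a5 a6 : Fin 6) : ![a0,a1,a2,a3,a4,a5,a6] 0 = a0 := rfl
lemma ve1 (a0 a1 a2 a3 a4 a5 a6 : Fin 6) : ![a0,a1,a2,a3,a4,a5,a6] 1 = a1 := rfl
lemma ve2 (a0 a1 a2 a3 a4 a5 a6 : Fin 6) : ![a0,a1,a2,a3,a4,a5,a6] 2 = a2 := rfl
lemma ve3 (a0 a1 a2 a3 a4 a5 a6 : Fin 6) : ![a0,a1,a2,a3,a4,a5,a6] 3 = a3 := rfl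
lemma ve4 (a0 a1 a2 a3 a4 a5 a6 : Fin 6) : ![a0,a1,a2,a3,a4,a5,a6] 4 = a4 := rfl
lemma ve5 (a0 a1 a2 a3 a4 a5 a6 : Fin 6) : ![a0,a1,a2,a3,a4,a5,a6] 5 = a5 := rfl
lemma ve6 (a0 a1 a2 a3 a4 a5 a6 : Fin 6) : ![a0,a1,a2,a3,a4,a5,a6] 6 = a6 := rfl
lemma pw0 : (-1 : ℂ) ^ (((0:Fin 7)) : ℕ) = 1 := by rw [show (((0:Fin 7)) : ℕ) = 0 from rfl]; norm_num
lemma pw1 : (-1 : ℂ) ^ (((1:Fin 7)) : ℕ) = -1 := by rw [show (((1:Fin 7)) : ℕ) = 1 from rfl]; norm_num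
lemma pw2 : (-1 : ℂ) ^ (((2:Fin 7)) : ℕ) = 1 := by rw [show (((2:Fin 7)) : ℕ) = 2 from rfl]; norm_num
lemma pw3 : (-1 : ℂ) ^ (((3:Fin 7)) : ℕ) = -1 := by rw [show (((3:Fin 7)) : ℕ) = 3 from rfl]; norm_num
lemma pw4 : (-1 : ℂ) ^ (((4:Fin 7)) : ℕ) = 1 := by rw [show (((4:Fin 7)) : ℕ) = 4 from rfl]; norm_num
lemma pw5 : (-1 : ℂ) ^ (((5:Fin 7)) : ℕ) = -1 := by rw [show (((5:Fin 7)) : ℕ) = 5 from rfl]; norm_num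
lemma pw6 : (-1 : ℂ) ^ (((6:Fin 7)) : ℕ) = 1 := by rw [show (((6:Fin 7)) : ℕ) = 6 from rfl]; norm_num


lemma eps6_pairswap (t0 t1 a b e f : Fin 6) :
    eps6 ![t0, t1, e, f, a, b] = eps6 ![t0, t1, a, b, e, f] := by
  have h1 : ![t0,t1,a,b,e,f] ∘ ⇑(Equiv.swap (2:Fin 6) 4 * Equiv.swap (3:Fin 6) 5)
      = ![t0,t1,e,f,a,b] := by
    funext x; fin_cases x <;> rfl
  rw [← h1, eps6_comp_equiv]
  have h2 : Equiv.Perm.sign (Equiv.swap (2:Fin 6) 4 * Equiv.swap (3:Fin 6) 5) = 1 := by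
    rw [Equiv.Perm.sign_mul, Equiv.Perm.sign_swap (by decide), Equiv.Perm.sign_swap (by decide)]
    rfl
  rw [h2]
  norm_num

/-- The contracted Schouten identity `2·K₀ + 2·T + 3·X = 0`. -/
lemma rel (P : Fin 6 → Fin 6 → Fin 6 → ℂ) (ω : Fin 6 → Fin 6 → ℂ)
    (hP : Antisym3 P) (hω : Antisym2 ω) (l m : Fin 6) :
    2 * (∑ c, ∑ i1, ∑ i2, ∑ i3, ∑ i4, ∑ i5,
        P l i1 i2 * P i3 i4 i5 * ω c m * eps6 ![c, i1, i2, i3, i4, i5])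
    + 2 * (∑ d, ∑ c, ∑ i2, ∑ i3, ∑ i4, ∑ i5,
        P l m i2 * P i3 i4 i5 * ω c d * eps6 ![d, c, i2, i3, i4, i5])
    + 3 * (∑ d, ∑ c, ∑ i2, ∑ i3, ∑ i4, ∑ i5,
        P l i2 i3 * P m i4 i5 * ω c d * eps6 ![d, c, i2, i3, i4, i5]) = 0 := by
  have big : ∑ d, ∑ c, ∑ i1, ∑ i2, ∑ i3, ∑ i4, ∑ i5,
      (P l i1 i2 * P i3 i4 i5 * ω c d) *
        (∑ k : Fin 7, (-1 : ℂ) ^ (k : ℕ) *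
          (if ![d,c,i1,i2,i3,i4,i5] k = m then (1:ℂ) else 0)
          * eps6 (![d,c,i1,i2,i3,i4,i5] ∘ Fin.succAbove k)) = 0 := by
    simp only [schouten, mul_zero, Finset.sum_const_zero]
  simp (config := { maxSteps := 100000000 }) only [Fin.sum_univ_seven,
    sa0, sa1, sa2, sa3, sa4, sa5, sa6,
    ve0, ve1, ve2, ve3, ve4, ve5, ve6, pw0, pw1, pw2, pw3, pw4, pw5, pw6,
    one_mul, neg_one_mul, neg_mul, mul_neg, mul_ite, ite_mul, zero_mul, mul_one,
    mul_zero] at big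
  simp (config := { maxSteps := 100000000 }) only [mul_add, Finset.sum_add_distrib,
    Finset.sum_neg_distrib] at big
  simp (config := { maxSteps := 100000000 }) only [mul_ite, mul_zero, mul_neg,
    Finset.sum_ite_irrel, Finset.sum_const_zero, Finset.sum_ite_eq', Finset.mem_univ,
    if_true, Finset.sum_neg_distrib] at big
  have eA2 : ∑ c, ∑ i1, ∑ i2, ∑ i3, ∑ i4, ∑ i5,
      P l i1 i2 * P i3 i4 i5 * ω m c * eps6 ![c, i1, i2, i3, i4, i5]
      = -(∑ c, ∑ i1, ∑ i2, ∑ i3, ∑ i4, ∑ i5,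
      P l i1 i2 * P i3 i4 i5 * ω c m * eps6 ![c, i1, i2, i3, i4, i5]) := by
    rw [← Finset.sum_neg_distrib]
    refine Finset.sum_congr rfl (fun c _ => ?_)
    rw [← Finset.sum_neg_distrib]
    refine Finset.sum_congr rfl (fun i1 _ => ?_)
    rw [← Finset.sum_neg_distrib]
    refine Finset.sum_congr rfl (fun i2 _ => ?_)
    rw [← Finset.sum_neg_distrib]
    refine Finset.sum_congr rfl (fun i3 _ => ?_)
    rw [← Finset.sum_neg_distrib]
    refine Finset.sum_congr rfl (fun i4 _ => ?_)
    rw [← Finset.sum_neg_distrib]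
    refine Finset.sum_congr rfl (fun i5 _ => ?_)
    rw [hω m c]
    ring
  have eA4 : ∑ d, ∑ c, ∑ i2, ∑ i3, ∑ i4, ∑ i5,
      P l i2 m * P i3 i4 i5 * ω c d * eps6 ![d, c, i2, i3, i4, i5]
      = -(∑ d, ∑ c, ∑ i2, ∑ i3, ∑ i4, ∑ i5,
      P l m i2 * P i3 i4 i5 * ω c d * eps6 ![d, c, i2, i3, i4, i5]) := by
    rw [← Finset.sum_neg_distrib]
    refine Finset.sum_congr rfl (fun d _ => ?_)
    rw [← Finset.sum_neg_distrib]
    refine Finset.sum_congr rfl (fun c _ => ?_)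
    rw [← Finset.sum_neg_distrib]
    refine Finset.sum_congr rfl (fun i2 _ => ?_)
    rw [← Finset.sum_neg_distrib]
    refine Finset.sum_congr rfl (fun i3 _ => ?_)
    rw [← Finset.sum_neg_distrib]
    refine Finset.sum_congr rfl (fun i4 _ => ?_)
    rw [← Finset.sum_neg_distrib]
    refine Finset.sum_congr rfl (fun i5 _ => ?_)
    rw [hP.2 l i2 m]
    ring
  have eA6 : ∑ d, ∑ c, ∑ i2, ∑ i3, ∑ i4, ∑ i5,
      P l i2 i3 * P i4 m i5 * ω c d * eps6 ![d, c, i2, i3, i4, i5]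
      = -(∑ d, ∑ c, ∑ i2, ∑ i3, ∑ i4, ∑ i5,
      P l i2 i3 * P m i4 i5 * ω c d * eps6 ![d, c, i2, i3, i4, i5]) := by
    rw [← Finset.sum_neg_distrib]
    refine Finset.sum_congr rfl (fun d _ => ?_)
    rw [← Finset.sum_neg_distrib]
    refine Finset.sum_congr rfl (fun c _ => ?_)
    rw [← Finset.sum_neg_distrib]
    refine Finset.sum_congr rfl (fun i2 _ => ?_)
    rw [← Finset.sum_neg_distrib]
    refine Finset.sum_congr rfl (fun i3 _ => ?_)
    rw [← Finset.sum_neg_distrib]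
    refine Finset.sum_congr rfl (fun i4 _ => ?_)
    rw [← Finset.sum_neg_distrib]
    refine Finset.sum_congr rfl (fun i5 _ => ?_)
    rw [hP.1 i4 m i5]
    ring
  have eA7 : ∑ d, ∑ c, ∑ i2, ∑ i3, ∑ i4, ∑ i5,
      P l i2 i3 * P i4 i5 m * ω c d * eps6 ![d, c, i2, i3, i4, i5]
      = ∑ d, ∑ c, ∑ i2, ∑ i3, ∑ i4, ∑ i5,
      P l i2 i3 * P m i4 i5 * ω c d * eps6 ![d, c, i2, i3, i4, i5] := by
    refine Finset.sum_congr rfl (fun d _ => ?_)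
    refine Finset.sum_congr rfl (fun c _ => ?_)
    refine Finset.sum_congr rfl (fun i2 _ => ?_)
    refine Finset.sum_congr rfl (fun i3 _ => ?_)
    refine Finset.sum_congr rfl (fun i4 _ => ?_)
    refine Finset.sum_congr rfl (fun i5 _ => ?_)
    rw [hP.2 i4 i5 m, hP.1 i4 m i5]
    ring
  rw [eA2, eA4, eA6, eA7] at big
  linear_combination big

/-- Symmetry of `N_{lm} = (K_P)^c_l ω_{cm}`. -/
lemma Nsym (P : Fin 6 → Fin 6 → Fin 6 → ℂ) (ω : Fin 6 → Fin 6 → ℂ)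
    (hP : Antisym3 P) (hω : Antisym2 ω) (hprim : WedgeZero P ω) (l m : Fin 6) :
    ∑ c, Kmat P c l * ω c m = ∑ c, Kmat P c m * ω c l := by
  -- N in terms of the big contraction
  have hKm : ∀ l m : Fin 6, ∑ c, Kmat P c l * ω c m
      = (1/12 : ℂ) * ∑ c, ∑ i1, ∑ i2, ∑ i3, ∑ i4, ∑ i5,
          P l i1 i2 * P i3 i4 i5 * ω c m * eps6 ![c, i1, i2, i3, i4, i5] := by
    intro l m
    rw [Finset.mul_sum]
    refine Finset.sum_congr rfl (fun c _ => ?_)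
    show (1/12 : ℂ) * (∑ i1, ∑ i2, ∑ i3, ∑ i4, ∑ i5,
        eps6 ![c, i1, i2, i3, i4, i5] * P l i1 i2 * P i3 i4 i5) * ω c m = _
    rw [mul_assoc]
    congr 1
    simp only [Finset.sum_mul]
    refine Finset.sum_congr rfl (fun i1 _ => ?_)
    refine Finset.sum_congr rfl (fun i2 _ => ?_)
    refine Finset.sum_congr rfl (fun i3 _ => ?_)
    refine Finset.sum_congr rfl (fun i4 _ => ?_)
    refine Finset.sum_congr rfl (fun i5 _ => ?_)
    ring
  -- the T-term vanishes by primitivity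
  have hT : ∀ l m : Fin 6, ∑ d, ∑ c, ∑ i2, ∑ i3, ∑ i4, ∑ i5,
      P l m i2 * P i3 i4 i5 * ω c d * eps6 ![d, c, i2, i3, i4, i5] = 0 := by
    intro l m
    have swap1 : ∑ d : Fin 6, ∑ c : Fin 6, ∑ i2 : Fin 6, (∑ i3, ∑ i4, ∑ i5,
        P l m i2 * P i3 i4 i5 * ω c d * eps6 ![d, c, i2, i3, i4, i5])
        = ∑ i2 : Fin 6, ∑ d : Fin 6, ∑ c : Fin 6, (∑ i3, ∑ i4, ∑ i5,
        P l m i2 * P i3 i4 i5 * ω c d * eps6 ![d, c, i2, i3, i4, i5]) := by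
      calc ∑ d : Fin 6, ∑ c : Fin 6, ∑ i2 : Fin 6, (∑ i3, ∑ i4, ∑ i5,
          P l m i2 * P i3 i4 i5 * ω c d * eps6 ![d, c, i2, i3, i4, i5])
          = ∑ d : Fin 6, ∑ i2 : Fin 6, ∑ c : Fin 6, (∑ i3, ∑ i4, ∑ i5,
          P l m i2 * P i3 i4 i5 * ω c d * eps6 ![d, c, i2, i3, i4, i5]) :=
            Finset.sum_congr rfl (fun d _ => Finset.sum_comm)
        _ = ∑ i2 : Fin 6, ∑ d : Fin 6, ∑ c : Fin 6, (∑ i3, ∑ i4, ∑ i5,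
          P l m i2 * P i3 i4 i5 * ω c d * eps6 ![d, c, i2, i3, i4, i5]) := Finset.sum_comm
    rw [swap1]
    refine Finset.sum_eq_zero (fun x _ => ?_)
    have pull : ∑ d : Fin 6, ∑ c : Fin 6, ∑ i3, ∑ i4, ∑ i5,
        P l m x * P i3 i4 i5 * ω c d * eps6 ![d, c, x, i3, i4, i5]
        = P l m x * ∑ d : Fin 6, ∑ c : Fin 6, ∑ i3, ∑ i4, ∑ i5,
        P i3 i4 i5 * ω c d * eps6 ![d, c, x, i3, i4, i5] := by
      simp only [Finset.mul_sum]
      refine Finset.sum_congr rfl (fun d _ => ?_)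
      refine Finset.sum_congr rfl (fun c _ => ?_)
      refine Finset.sum_congr rfl (fun i3 _ => ?_)
      refine Finset.sum_congr rfl (fun i4 _ => ?_)
      refine Finset.sum_congr rfl (fun i5 _ => ?_)
      ring
    rw [pull, Qzero P ω hprim x, mul_zero]
  -- the X-term is symmetric in l and m
  have hX : ∑ d, ∑ c, ∑ i2, ∑ i3, ∑ i4, ∑ i5,
      P l i2 i3 * P m i4 i5 * ω c d * eps6 ![d, c, i2, i3, i4, i5]
      = ∑ d, ∑ c, ∑ i2, ∑ i3, ∑ i4, ∑ i5,
      P m i2 i3 * P l i4 i5 * ω c d * eps6 ![d, c, i2, i3, i4, i5] := by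
    refine Finset.sum_congr rfl (fun d _ => ?_)
    refine Finset.sum_congr rfl (fun c _ => ?_)
    calc ∑ i2, ∑ i3, ∑ i4, ∑ i5,
        P l i2 i3 * P m i4 i5 * ω c d * eps6 ![d, c, i2, i3, i4, i5]
        = ∑ i2, ∑ i4, ∑ i3, ∑ i5,
        P l i2 i3 * P m i4 i5 * ω c d * eps6 ![d, c, i2, i3, i4, i5] :=
          Finset.sum_congr rfl (fun i2 _ => Finset.sum_comm)
      _ = ∑ i4, ∑ i2, ∑ i3, ∑ i5,
        P l i2 i3 * P m i4 i5 * ω c d * eps6 ![d, c, i2, i3, i4, i5] := Finset.sum_comm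
      _ = ∑ i4, ∑ i2, ∑ i5, ∑ i3,
        P l i2 i3 * P m i4 i5 * ω c d * eps6 ![d, c, i2, i3, i4, i5] :=
          Finset.sum_congr rfl (fun i4 _ => Finset.sum_congr rfl (fun i2 _ => Finset.sum_comm))
      _ = ∑ i4, ∑ i5, ∑ i2, ∑ i3,
        P l i2 i3 * P m i4 i5 * ω c d * eps6 ![d, c, i2, i3, i4, i5] :=
          Finset.sum_congr rfl (fun i4 _ => Finset.sum_comm)
      _ = ∑ i2, ∑ i3, ∑ i4, ∑ i5,
        P m i2 i3 * P l i4 i5 * ω c d * eps6 ![d, c, i2, i3, i4, i5] := by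
          refine Finset.sum_congr rfl (fun i2 _ => ?_)
          refine Finset.sum_congr rfl (fun i3 _ => ?_)
          refine Finset.sum_congr rfl (fun i4 _ => ?_)
          refine Finset.sum_congr rfl (fun i5 _ => ?_)
          rw [eps6_pairswap]
          ring
  have r1 := rel P ω hP hω l m
  have r2 := rel P ω hP hω m l
  rw [hKm l m, hKm m l]
  linear_combination (1/24 : ℂ) * r1 - (1/24 : ℂ) * r2 - (1/12 : ℂ) * hT l m
    + (1/12 : ℂ) * hT m l - (1/8 : ℂ) * hX

def Afun (P : Fin 6 → Fin 6 → Fin 6 → ℂ) (ω : Fin 6 → Fin 6 → ℂ) (g : Fin 5 → Fin 6) : ℂ :=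
  P (g 0) (g 1) (g 2) * ω (g 3) (g 4)

lemma update_comp (f : Fin 5 → Fin 6) (σ : Equiv.Perm (Fin 5)) (b : Fin 5) (c : Fin 6) :
    Function.update (f ∘ ⇑σ) b c = (Function.update f (σ b) c) ∘ ⇑σ := by
  funext y
  by_cases hy : y = b
  · subst hy
    show Function.update (f ∘ ⇑σ) y c y = Function.update f (σ y) c (σ y)
    rw [Function.update_self, Function.update_self]
  · show Function.update (f ∘ ⇑σ) b c y = Function.update f (σ b) c (σ y)
    rw [Function.update_of_ne hy, Function.update_of_ne (fun hc => hy (σ.injective hc))]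
    rfl

lemma hprimA (P : Fin 6 → Fin 6 → Fin 6 → ℂ) (ω : Fin 6 → Fin 6 → ℂ)
    (hprim : WedgeZero P ω) (g : Fin 5 → Fin 6) :
    ∑ σ : Equiv.Perm (Fin 5), ((Equiv.Perm.sign σ : ℤ) : ℂ) * Afun P ω (g ∘ ⇑σ) = 0 := by
  calc ∑ σ : Equiv.Perm (Fin 5), ((Equiv.Perm.sign σ : ℤ) : ℂ) * Afun P ω (g ∘ ⇑σ)
      = ∑ σ : Equiv.Perm (Fin 5), ((Equiv.Perm.sign σ : ℤ) : ℂ) *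
          P (g (σ 0)) (g (σ 1)) (g (σ 2)) * ω (g (σ 3)) (g (σ 4)) :=
        Finset.sum_congr rfl (fun σ _ => by
          simp only [Afun, Function.comp_apply]; ring)
    _ = 0 := hprim g

lemma sum_perm_mulRight (F : (Fin 5 → Fin 6) → ℂ) (f : Fin 5 → Fin 6)
    (s : Equiv.Perm (Fin 5)) :
    ∑ σ : Equiv.Perm (Fin 5), ((Equiv.Perm.sign σ : ℤ) : ℂ) * F (f ∘ ⇑(σ * s))
      = ((Equiv.Perm.sign s : ℤ) : ℂ) *
        ∑ σ : Equiv.Perm (Fin 5), ((Equiv.Perm.sign σ : ℤ) : ℂ) * F (f ∘ ⇑σ) := by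
  have h1 : ∀ σ : Equiv.Perm (Fin 5), ((Equiv.Perm.sign σ : ℤ) : ℂ)
      = ((Equiv.Perm.sign s : ℤ) : ℂ) * ((Equiv.Perm.sign (σ * s) : ℤ) : ℂ) := by
    intro σ
    have : (Equiv.Perm.sign s) * (Equiv.Perm.sign (σ * s)) = Equiv.Perm.sign σ := by
      rw [Equiv.Perm.sign_mul, mul_comm (Equiv.Perm.sign σ), ← mul_assoc,
        Int.units_mul_self, one_mul]
    rw [← this]; push_cast; ring
  have hcomp := Equiv.sum_comp (Equiv.mulRight s)
    (fun τ => ((Equiv.Perm.sign τ : ℤ) : ℂ) * F (f ∘ ⇑τ))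
  simp only [Equiv.coe_mulRight] at hcomp
  calc ∑ σ : Equiv.Perm (Fin 5), ((Equiv.Perm.sign σ : ℤ) : ℂ) * F (f ∘ ⇑(σ * s))
      = ∑ σ : Equiv.Perm (Fin 5), ((Equiv.Perm.sign s : ℤ) : ℂ) *
          (((Equiv.Perm.sign (σ * s) : ℤ) : ℂ) * F (f ∘ ⇑(σ * s))) :=
        Finset.sum_congr rfl (fun σ _ => by rw [h1 σ]; ring)
    _ = ((Equiv.Perm.sign s : ℤ) : ℂ) * ∑ σ : Equiv.Perm (Fin 5),
          ((Equiv.Perm.sign (σ * s) : ℤ) : ℂ) * F (f ∘ ⇑(σ * s)) := by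
        rw [Finset.mul_sum]
    _ = _ := by rw [hcomp]


/-- if `P ∧ ω = 0` for `P ∈ ∧³(ℂ^6)*` and `ω ∈ ∧²(ℂ^6)*`, then the
dual three-form `P̃ = (1/3!)(K_P)^c_i P_{cjk} e^i ∧ e^j ∧ e^k` also satisfies
`P̃ ∧ ω = 0` (as always, the wedge antisymmetrizes the components). -/
theorem Ptilde_wedge_omega_eq_zero (P : Fin 6 → Fin 6 → Fin 6 → ℂ)
    (ω : Fin 6 → Fin 6 → ℂ) (hP : Antisym3 P) (hω : Antisym2 ω)
    (hprim : WedgeZero P ω) :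
    WedgeZero (PtildeRaw P) ω := by
  intro f
  have hN := Nsym P ω hP hω hprim
  -- Step 1: the "Leibniz" antisymmetrized sum vanishes
  have S1 : ∑ σ : Equiv.Perm (Fin 5), ((Equiv.Perm.sign σ : ℤ) : ℂ) *
      (∑ b : Fin 5, ∑ c : Fin 6,
        Kmat P c (f (σ b)) * Afun P ω (Function.update (f ∘ ⇑σ) b c)) = 0 := by
    have e1 : ∀ σ : Equiv.Perm (Fin 5), ∑ b : Fin 5, ∑ c : Fin 6,
        Kmat P c (f (σ b)) * Afun P ω (Function.update (f ∘ ⇑σ) b c)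
        = ∑ b : Fin 5, ∑ c : Fin 6,
          Kmat P c (f b) * Afun P ω ((Function.update f b c) ∘ ⇑σ) := by
      intro σ
      have hc := Equiv.sum_comp σ (fun b => ∑ c : Fin 6,
        Kmat P c (f b) * Afun P ω ((Function.update f b c) ∘ ⇑σ))
      rw [← hc]
      exact Finset.sum_congr rfl (fun b _ => Finset.sum_congr rfl (fun c _ => by
        rw [update_comp]))
    calc ∑ σ : Equiv.Perm (Fin 5), ((Equiv.Perm.sign σ : ℤ) : ℂ) *
        (∑ b : Fin 5, ∑ c : Fin 6,
          Kmat P c (f (σ b)) * Afun P ω (Function.update (f ∘ ⇑σ) b c))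
        = ∑ σ : Equiv.Perm (Fin 5), ∑ b : Fin 5, ∑ c : Fin 6,
            ((Equiv.Perm.sign σ : ℤ) : ℂ) *
            (Kmat P c (f b) * Afun P ω ((Function.update f b c) ∘ ⇑σ)) := by
          refine Finset.sum_congr rfl (fun σ _ => ?_)
          rw [e1 σ, Finset.mul_sum]
          refine Finset.sum_congr rfl (fun b _ => ?_)
          rw [Finset.mul_sum]
      _ = ∑ b : Fin 5, ∑ c : Fin 6, ∑ σ : Equiv.Perm (Fin 5),
            ((Equiv.Perm.sign σ : ℤ) : ℂ) *
            (Kmat P c (f b) * Afun P ω ((Function.update f b c) ∘ ⇑σ)) := by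
          rw [Finset.sum_comm]
          exact Finset.sum_congr rfl (fun b _ => Finset.sum_comm)
      _ = 0 := by
          refine Finset.sum_eq_zero (fun b _ => Finset.sum_eq_zero (fun c _ => ?_))
          calc ∑ σ : Equiv.Perm (Fin 5), ((Equiv.Perm.sign σ : ℤ) : ℂ) *
              (Kmat P c (f b) * Afun P ω ((Function.update f b c) ∘ ⇑σ))
              = Kmat P c (f b) * ∑ σ : Equiv.Perm (Fin 5),
                ((Equiv.Perm.sign σ : ℤ) : ℂ) * Afun P ω ((Function.update f b c) ∘ ⇑σ) := by
                rw [Finset.mul_sum]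
                exact Finset.sum_congr rfl (fun σ _ => by ring)
            _ = 0 := by rw [hprimA P ω hprim (Function.update f b c), mul_zero]
  -- Step 2: pointwise Leibniz expansion (using symmetry of N)
  have key : ∀ g : Fin 5 → Fin 6,
      ∑ b : Fin 5, ∑ c : Fin 6, Kmat P c (g b) * Afun P ω (Function.update g b c)
      = (∑ c, Kmat P c (g 0) * P c (g 1) (g 2)) * ω (g 3) (g 4)
      + (∑ c, Kmat P c (g 1) * P (g 0) c (g 2)) * ω (g 3) (g 4)
      + (∑ c, Kmat P c (g 2) * P (g 0) (g 1) c) * ω (g 3) (g 4) := by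
    intro g
    rw [Fin.sum_univ_five]
    have u0 : ∀ c, Afun P ω (Function.update g 0 c) = P c (g 1) (g 2) * ω (g 3) (g 4) := by
      intro c; simp [Afun, Function.update]
    have u1 : ∀ c, Afun P ω (Function.update g 1 c) = P (g 0) c (g 2) * ω (g 3) (g 4) := by
      intro c; simp [Afun, Function.update]
    have u2 : ∀ c, Afun P ω (Function.update g 2 c) = P (g 0) (g 1) c * ω (g 3) (g 4) := by
      intro c; simp [Afun, Function.update]
    have u3 : ∀ c, Afun P ω (Function.update g 3 c) = P (g 0) (g 1) (g 2) * ω c (g 4) := by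
      intro c; simp [Afun, Function.update]
    have u4 : ∀ c, Afun P ω (Function.update g 4 c) = P (g 0) (g 1) (g 2) * ω (g 3) c := by
      intro c; simp [Afun, Function.update]
    simp only [u0, u1, u2, u3, u4]
    have p0 : ∑ c, Kmat P c (g 0) * (P c (g 1) (g 2) * ω (g 3) (g 4))
        = (∑ c, Kmat P c (g 0) * P c (g 1) (g 2)) * ω (g 3) (g 4) := by
      rw [Finset.sum_mul]; exact Finset.sum_congr rfl (fun c _ => by ring)
    have p1 : ∑ c, Kmat P c (g 1) * (P (g 0) c (g 2) * ω (g 3) (g 4))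
        = (∑ c, Kmat P c (g 1) * P (g 0) c (g 2)) * ω (g 3) (g 4) := by
      rw [Finset.sum_mul]; exact Finset.sum_congr rfl (fun c _ => by ring)
    have p2 : ∑ c, Kmat P c (g 2) * (P (g 0) (g 1) c * ω (g 3) (g 4))
        = (∑ c, Kmat P c (g 2) * P (g 0) (g 1) c) * ω (g 3) (g 4) := by
      rw [Finset.sum_mul]; exact Finset.sum_congr rfl (fun c _ => by ring)
    have p3 : ∑ c, Kmat P c (g 3) * (P (g 0) (g 1) (g 2) * ω c (g 4))
        = P (g 0) (g 1) (g 2) * ∑ c, Kmat P c (g 3) * ω c (g 4) := by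
      rw [Finset.mul_sum]; exact Finset.sum_congr rfl (fun c _ => by ring)
    have p4 : ∑ c, Kmat P c (g 4) * (P (g 0) (g 1) (g 2) * ω (g 3) c)
        = -(P (g 0) (g 1) (g 2) * ∑ c, Kmat P c (g 4) * ω c (g 3)) := by
      rw [Finset.mul_sum, ← Finset.sum_neg_distrib]
      exact Finset.sum_congr rfl (fun c _ => by rw [hω (g 3) c]; ring)
    rw [p0, p1, p2, p3, p4, hN (g 4) (g 3)]
    ring
  -- combine steps 1 and 2
  have S2 : (∑ σ : Equiv.Perm (Fin 5), ((Equiv.Perm.sign σ : ℤ) : ℂ) *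
        ((∑ c, Kmat P c (f (σ 0)) * P c (f (σ 1)) (f (σ 2))) * ω (f (σ 3)) (f (σ 4))))
      + (∑ σ : Equiv.Perm (Fin 5), ((Equiv.Perm.sign σ : ℤ) : ℂ) *
        ((∑ c, Kmat P c (f (σ 1)) * P (f (σ 0)) c (f (σ 2))) * ω (f (σ 3)) (f (σ 4))))
      + (∑ σ : Equiv.Perm (Fin 5), ((Equiv.Perm.sign σ : ℤ) : ℂ) *
        ((∑ c, Kmat P c (f (σ 2)) * P (f (σ 0)) (f (σ 1)) c) * ω (f (σ 3)) (f (σ 4)))) = 0 := by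
    rw [← S1, ← Finset.sum_add_distrib, ← Finset.sum_add_distrib]
    refine Finset.sum_congr rfl (fun σ _ => ?_)
    have k2 := key (f ∘ ⇑σ)
    simp only [Function.comp_apply] at k2
    rw [k2]
    ring
  -- Step 3: all three pieces have equal antisymmetrizations
  have st3a : ∑ σ : Equiv.Perm (Fin 5), ((Equiv.Perm.sign σ : ℤ) : ℂ) *
        ((∑ c, Kmat P c (f (σ 1)) * P (f (σ 0)) c (f (σ 2))) * ω (f (σ 3)) (f (σ 4)))
      = ∑ σ : Equiv.Perm (Fin 5), ((Equiv.Perm.sign σ : ℤ) : ℂ) *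
        ((∑ c, Kmat P c (f (σ 0)) * P c (f (σ 1)) (f (σ 2))) * ω (f (σ 3)) (f (σ 4))) := by
    have hs := sum_perm_mulRight
      (fun g => (∑ c, Kmat P c (g 0) * P c (g 1) (g 2)) * ω (g 3) (g 4)) f
      (Equiv.swap (0 : Fin 5) 1)
    rw [Equiv.Perm.sign_swap (by decide)] at hs
    simp only [Function.comp_apply, Equiv.Perm.mul_apply,
      show (Equiv.swap (0:Fin 5) 1) 0 = 1 from by decide,
      show (Equiv.swap (0:Fin 5) 1) 1 = 0 from by decide,
      show (Equiv.swap (0:Fin 5) 1) 2 = 2 from by decide,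
      show (Equiv.swap (0:Fin 5) 1) 3 = 3 from by decide,
      show (Equiv.swap (0:Fin 5) 1) 4 = 4 from by decide] at hs
    push_cast at hs
    calc ∑ σ : Equiv.Perm (Fin 5), ((Equiv.Perm.sign σ : ℤ) : ℂ) *
          ((∑ c, Kmat P c (f (σ 1)) * P (f (σ 0)) c (f (σ 2))) * ω (f (σ 3)) (f (σ 4)))
        = ∑ σ : Equiv.Perm (Fin 5), -(((Equiv.Perm.sign σ : ℤ) : ℂ) *
          ((∑ c, Kmat P c (f (σ 1)) * P c (f (σ 0)) (f (σ 2))) * ω (f (σ 3)) (f (σ 4)))) := by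
          refine Finset.sum_congr rfl (fun σ _ => ?_)
          have hinner : ∑ c, Kmat P c (f (σ 1)) * P (f (σ 0)) c (f (σ 2))
              = -∑ c, Kmat P c (f (σ 1)) * P c (f (σ 0)) (f (σ 2)) := by
            rw [← Finset.sum_neg_distrib]
            exact Finset.sum_congr rfl (fun c _ => by rw [hP.1 (f (σ 0)) c (f (σ 2))]; ring)
          rw [hinner]; ring
      _ = -∑ σ : Equiv.Perm (Fin 5), ((Equiv.Perm.sign σ : ℤ) : ℂ) *
          ((∑ c, Kmat P c (f (σ 1)) * P c (f (σ 0)) (f (σ 2))) * ω (f (σ 3)) (f (σ 4))) := by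
          rw [Finset.sum_neg_distrib]
      _ = _ := by rw [hs]; ring
  have st3b : ∑ σ : Equiv.Perm (Fin 5), ((Equiv.Perm.sign σ : ℤ) : ℂ) *
        ((∑ c, Kmat P c (f (σ 2)) * P (f (σ 0)) (f (σ 1)) c) * ω (f (σ 3)) (f (σ 4)))
      = ∑ σ : Equiv.Perm (Fin 5), ((Equiv.Perm.sign σ : ℤ) : ℂ) *
        ((∑ c, Kmat P c (f (σ 0)) * P c (f (σ 1)) (f (σ 2))) * ω (f (σ 3)) (f (σ 4))) := by
    have hs := sum_perm_mulRight
      (fun g => (∑ c, Kmat P c (g 0) * P c (g 1) (g 2)) * ω (g 3) (g 4)) f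
      (Equiv.swap (0 : Fin 5) 2)
    rw [Equiv.Perm.sign_swap (by decide)] at hs
    simp only [Function.comp_apply, Equiv.Perm.mul_apply,
      show (Equiv.swap (0:Fin 5) 2) 0 = 2 from by decide,
      show (Equiv.swap (0:Fin 5) 2) 1 = 1 from by decide,
      show (Equiv.swap (0:Fin 5) 2) 2 = 0 from by decide,
      show (Equiv.swap (0:Fin 5) 2) 3 = 3 from by decide,
      show (Equiv.swap (0:Fin 5) 2) 4 = 4 from by decide] at hs
    push_cast at hs
    calc ∑ σ : Equiv.Perm (Fin 5), ((Equiv.Perm.sign σ : ℤ) : ℂ) *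
          ((∑ c, Kmat P c (f (σ 2)) * P (f (σ 0)) (f (σ 1)) c) * ω (f (σ 3)) (f (σ 4)))
        = ∑ σ : Equiv.Perm (Fin 5), -(((Equiv.Perm.sign σ : ℤ) : ℂ) *
          ((∑ c, Kmat P c (f (σ 2)) * P c (f (σ 1)) (f (σ 0))) * ω (f (σ 3)) (f (σ 4)))) := by
          refine Finset.sum_congr rfl (fun σ _ => ?_)
          have hinner : ∑ c, Kmat P c (f (σ 2)) * P (f (σ 0)) (f (σ 1)) c
              = -∑ c, Kmat P c (f (σ 2)) * P c (f (σ 1)) (f (σ 0)) := by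
            rw [← Finset.sum_neg_distrib]
            refine Finset.sum_congr rfl (fun c _ => ?_)
            rw [hP.2 (f (σ 0)) (f (σ 1)) c, hP.1 (f (σ 0)) c (f (σ 1)),
              hP.2 c (f (σ 0)) (f (σ 1))]
            ring
          rw [hinner]; ring
      _ = -∑ σ : Equiv.Perm (Fin 5), ((Equiv.Perm.sign σ : ℤ) : ℂ) *
          ((∑ c, Kmat P c (f (σ 2)) * P c (f (σ 1)) (f (σ 0))) * ω (f (σ 3)) (f (σ 4))) := by
          rw [Finset.sum_neg_distrib]
      _ = _ := by rw [hs]; ring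
  rw [st3a, st3b] at S2
  have hgoal : ∑ σ : Equiv.Perm (Fin 5), ((Equiv.Perm.sign σ : ℤ) : ℂ) *
      PtildeRaw P (f (σ 0)) (f (σ 1)) (f (σ 2)) * ω (f (σ 3)) (f (σ 4))
      = ∑ σ : Equiv.Perm (Fin 5), ((Equiv.Perm.sign σ : ℤ) : ℂ) *
        ((∑ c, Kmat P c (f (σ 0)) * P c (f (σ 1)) (f (σ 2))) * ω (f (σ 3)) (f (σ 4))) := by
    refine Finset.sum_congr rfl (fun σ _ => ?_)
    simp only [PtildeRaw]
    ring
  rw [hgoal]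
  linear_combination (1/3 : ℂ) * S2
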